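/- Let H be a Hopf algebra with bijective antipode and let H₄=H⊗H be the Yetter-Drinfel'd-Long bimodule with h▷(k⊗l)=h₁kS(h₂)⊗l, (k⊗l)◁h=k⊗S(h₁)lh₂, ρˡ(k⊗l)=k₁⊗(k₂⊗l), ρʳ(k⊗l)=(k⊗l₁)⊗l₂. Then the braiding ψ_{H₄,H₄} is a symmetry if and only if H is commutative. -/

import Mathlib

noncomputable section
open TensorProduct

namespace YDL

variable (K : Type) [Field K] (H : Type) [Ring H] [HopfAlgebra K H]

abbrev mu : H ⊗[K] H →ₗ[K] H := LinearMap.mul' K H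
abbrev cm : H →ₗ[K] H ⊗[K] H := Coalgebra.comul
abbrev cu : H →ₗ[K] K := Coalgebra.counit
abbrev sa : H →ₗ[K] H := HopfAlgebra.antipode (R := K)
abbrev eta : K →ₗ[K] H := Algebra.linearMap K H

/-- Yetter–Drinfel'd–Long bimodule over `H` (Definition 2.1). -/
structure IsYDLong (M : Type) [AddCommGroup M] [Module K M]
    (lact : H ⊗[K] M →ₗ[K] M) (ract : M ⊗[K] H →ₗ[K] M)
    (lcoact : M →ₗ[K] H ⊗[K] M) (rcoact : M →ₗ[K] M ⊗[K] H) : Prop where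
  lact_one : ∀ m : M, lact (1 ⊗ₜ m) = m
  lact_mul : ∀ (g h : H) (m : M), lact ((g * h) ⊗ₜ m) = lact (g ⊗ₜ lact (h ⊗ₜ m))
  ract_one : ∀ m : M, ract (m ⊗ₜ 1) = m
  ract_mul : ∀ (m : M) (g h : H), ract (m ⊗ₜ (g * h)) = ract (ract (m ⊗ₜ g) ⊗ₜ h)
  bimod : ∀ (h : H) (m : M) (g : H),
    ract (lact (h ⊗ₜ m) ⊗ₜ g) = lact (h ⊗ₜ ract (m ⊗ₜ g))
  lcoassoc : (TensorProduct.assoc K H H M).toLinearMap ∘ₗ (cm K H).rTensor M ∘ₗ lcoact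
      = lcoact.lTensor H ∘ₗ lcoact
  lcounit : (TensorProduct.lid K M).toLinearMap ∘ₗ (cu K H).rTensor M ∘ₗ lcoact
      = LinearMap.id
  rcoassoc : (TensorProduct.assoc K M H H).toLinearMap ∘ₗ rcoact.rTensor H ∘ₗ rcoact
      = (cm K H).lTensor M ∘ₗ rcoact
  rcounit : (TensorProduct.rid K M).toLinearMap ∘ₗ (cu K H).lTensor M ∘ₗ rcoact
      = LinearMap.id
  bicomod : rcoact.lTensor H ∘ₗ lcoact
      = (TensorProduct.assoc K H M H).toLinearMap ∘ₗ lcoact.rTensor H ∘ₗ rcoact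
  yd23 : (mu K H).rTensor M ∘ₗ (TensorProduct.comm K H H).toLinearMap.rTensor M
        ∘ₗ (TensorProduct.assoc K H H M).symm.toLinearMap ∘ₗ lcoact.lTensor H ∘ₗ lact.lTensor H
        ∘ₗ (TensorProduct.assoc K H H M).toLinearMap
        ∘ₗ (TensorProduct.comm K H H).toLinearMap.rTensor M ∘ₗ (cm K H).rTensor M
      = TensorProduct.map (mu K H) lact
        ∘ₗ (tensorTensorTensorComm K H H H M).toLinearMap
        ∘ₗ TensorProduct.map (cm K H) lcoact
  long24 : rcoact ∘ₗ lact
      = lact.rTensor H ∘ₗ (TensorProduct.assoc K H M H).symm.toLinearMap ∘ₗ rcoact.lTensor H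
  yd25 : (mu K H).lTensor M ∘ₗ (TensorProduct.comm K H H).toLinearMap.lTensor M
        ∘ₗ (TensorProduct.assoc K M H H).toLinearMap ∘ₗ rcoact.rTensor H ∘ₗ ract.rTensor H
        ∘ₗ (TensorProduct.assoc K M H H).symm.toLinearMap
        ∘ₗ (TensorProduct.comm K H H).toLinearMap.lTensor M ∘ₗ (cm K H).lTensor M
      = TensorProduct.map ract (mu K H)
        ∘ₗ (tensorTensorTensorComm K M H H H).toLinearMap
        ∘ₗ TensorProduct.map rcoact (cm K H)
  long26 : lcoact ∘ₗ ract
      = ract.lTensor H ∘ₗ (TensorProduct.assoc K H M H).toLinearMap ∘ₗ lcoact.rTensor H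

/-- The braiding `ψ_{M,N}(m ⊗ n) = m₍₋₁₎ ▷ n₍₀₎ ⊗ m₍₀₎ ◁ n₍₁₎`. -/
def braid {M N : Type} [AddCommGroup M] [Module K M] [AddCommGroup N] [Module K N]
    (lcoactM : M →ₗ[K] H ⊗[K] M) (ractM : M ⊗[K] H →ₗ[K] M)
    (lactN : H ⊗[K] N →ₗ[K] N) (rcoactN : N →ₗ[K] N ⊗[K] H) :
    M ⊗[K] N →ₗ[K] N ⊗[K] M :=
  TensorProduct.map lactN ractM ∘ₗ (tensorTensorTensorComm K H M N H).toLinearMap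
    ∘ₗ TensorProduct.map lcoactM rcoactN

/-- The inverse braiding `ψ⁻¹_{N,M}(n ⊗ m) = m₍₀₎ ◁ S⁻¹(n₍₁₎) ⊗ S⁻¹(m₍₋₁₎) ▷ n₍₀₎`,
where `Si` is the (given) inverse of the antipode. -/
def braidInv (Si : H →ₗ[K] H) {M N : Type}
    [AddCommGroup M] [Module K M] [AddCommGroup N] [Module K N]
    (lcoactM : M →ₗ[K] H ⊗[K] M) (ractM : M ⊗[K] H →ₗ[K] M)
    (lactN : H ⊗[K] N →ₗ[K] N) (rcoactN : N →ₗ[K] N ⊗[K] H) :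
    N ⊗[K] M →ₗ[K] M ⊗[K] N :=
  TensorProduct.map ractM lactN
    ∘ₗ (TensorProduct.comm K (H ⊗[K] N) (M ⊗[K] H)).toLinearMap
    ∘ₗ (tensorTensorTensorComm K H M N H).toLinearMap
    ∘ₗ (TensorProduct.comm K (N ⊗[K] H) (H ⊗[K] M)).toLinearMap
    ∘ₗ TensorProduct.map (Si.lTensor N ∘ₗ rcoactN) (Si.rTensor M ∘ₗ lcoactM)

/-! Structure maps of `H₁, H₂, H₃, H₄` from Example 2.4. -/

/-- `h ▷ (k ⊗ l) = hk ⊗ l`. -/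
def lactA : H ⊗[K] (H ⊗[K] H) →ₗ[K] H ⊗[K] H :=
  (mu K H).rTensor H ∘ₗ (TensorProduct.assoc K H H H).symm.toLinearMap

/-- `l ⊗ h ↦ S(h₁) l h₂`. -/
def adR : H ⊗[K] H →ₗ[K] H :=
  mu K H ∘ₗ (mu K H ∘ₗ (sa K H).rTensor H ∘ₗ (TensorProduct.comm K H H).toLinearMap).rTensor H
    ∘ₗ (TensorProduct.assoc K H H H).symm.toLinearMap ∘ₗ (cm K H).lTensor H

/-- `(k ⊗ l) ◁ h = k ⊗ S(h₁) l h₂`. -/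
def ractA : (H ⊗[K] H) ⊗[K] H →ₗ[K] H ⊗[K] H :=
  (adR K H).lTensor H ∘ₗ (TensorProduct.assoc K H H H).toLinearMap

/-- `k ↦ k₁ S(k₃) ⊗ k₂`. -/
def c1 : H →ₗ[K] H ⊗[K] H :=
  (mu K H).rTensor H ∘ₗ (TensorProduct.assoc K H H H).symm.toLinearMap
    ∘ₗ ((sa K H).rTensor H ∘ₗ (TensorProduct.comm K H H).toLinearMap).lTensor H
    ∘ₗ (cm K H).lTensor H ∘ₗ cm K H

/-- `ρˡ(k ⊗ l) = k₁ S(k₃) ⊗ (k₂ ⊗ l)`. -/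
def lcoactA : H ⊗[K] H →ₗ[K] H ⊗[K] (H ⊗[K] H) :=
  (TensorProduct.assoc K H H H).toLinearMap ∘ₗ (c1 K H).rTensor H

/-- `ρʳ(k ⊗ l) = (k ⊗ l₁) ⊗ l₂`. -/
def rcoactA : H ⊗[K] H →ₗ[K] (H ⊗[K] H) ⊗[K] H :=
  (TensorProduct.assoc K H H H).symm.toLinearMap ∘ₗ (cm K H).lTensor H

/-- `h ⊗ x ↦ h₁ x S(h₂)`. -/
def ad : H ⊗[K] H →ₗ[K] H :=
  mu K H ∘ₗ (mu K H ∘ₗ (sa K H).lTensor H ∘ₗ (TensorProduct.comm K H H).toLinearMap).lTensor H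
    ∘ₗ (TensorProduct.assoc K H H H).toLinearMap ∘ₗ (cm K H).rTensor H

/-- `h ▷ (k ⊗ l) = h₁ k S(h₂) ⊗ l`. -/
def lactB : H ⊗[K] (H ⊗[K] H) →ₗ[K] H ⊗[K] H :=
  (ad K H).rTensor H ∘ₗ (TensorProduct.assoc K H H H).symm.toLinearMap

/-- `(k ⊗ l) ◁ h = k ⊗ l h`. -/
def ractB : (H ⊗[K] H) ⊗[K] H →ₗ[K] H ⊗[K] H :=
  (mu K H).lTensor H ∘ₗ (TensorProduct.assoc K H H H).toLinearMap

/-- `ρˡ(k ⊗ l) = k₁ ⊗ (k₂ ⊗ l)`. -/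
def lcoactB : H ⊗[K] H →ₗ[K] H ⊗[K] (H ⊗[K] H) :=
  (TensorProduct.assoc K H H H).toLinearMap ∘ₗ (cm K H).rTensor H

/-- `l ↦ l₂ ⊗ S(l₁) l₃`. -/
def c2 : H →ₗ[K] H ⊗[K] H :=
  (mu K H).lTensor H ∘ₗ ((sa K H).rTensor H).lTensor H ∘ₗ (TensorProduct.assoc K H H H).toLinearMap
    ∘ₗ (TensorProduct.comm K H H).toLinearMap.rTensor H ∘ₗ (cm K H).rTensor H ∘ₗ cm K H

/-- `ρʳ(k ⊗ l) = (k ⊗ l₂) ⊗ S(l₁) l₃`. -/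
def rcoactB : H ⊗[K] H →ₗ[K] (H ⊗[K] H) ⊗[K] H :=
  (TensorProduct.assoc K H H H).symm.toLinearMap ∘ₗ (c2 K H).lTensor H

/-- The `u`-map `m ↦ m₍₋₁₎ ▷ (m₍₀₎₍₀₎ ◁ m₍₀₎₍₁₎)`; the `u`-condition says it is the identity. -/
def uMap {M : Type} [AddCommGroup M] [Module K M]
    (lact : H ⊗[K] M →ₗ[K] M) (ract : M ⊗[K] H →ₗ[K] M)
    (lcoact : M →ₗ[K] H ⊗[K] M) (rcoact : M →ₗ[K] M ⊗[K] H) : M →ₗ[K] M :=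
  lact ∘ₗ ract.lTensor H ∘ₗ rcoact.lTensor H ∘ₗ lcoact

/-! Quasitriangular structures. -/

/-- `a ⊗ b ↦ (a ⊗ 1) ⊗ b`. -/
def i13 : H ⊗[K] H →ₗ[K] (H ⊗[K] H) ⊗[K] H :=
  (Algebra.TensorProduct.includeLeft (R := K) (A := H) (B := H) (S := K)).toLinearMap.rTensor H

/-- `a ⊗ b ↦ (1 ⊗ a) ⊗ b`. -/
def i23 : H ⊗[K] H →ₗ[K] (H ⊗[K] H) ⊗[K] H :=
  (Algebra.TensorProduct.includeRight (R := K) (A := H) (B := H)).toLinearMap.rTensor H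

/-- `a ⊗ b ↦ a ⊗ (1 ⊗ b)`. -/
def j13 : H ⊗[K] H →ₗ[K] H ⊗[K] (H ⊗[K] H) :=
  (Algebra.TensorProduct.includeRight (R := K) (A := H) (B := H)).toLinearMap.lTensor H

/-- `a ⊗ b ↦ a ⊗ (b ⊗ 1)`. -/
def j12 : H ⊗[K] H →ₗ[K] H ⊗[K] (H ⊗[K] H) :=
  (Algebra.TensorProduct.includeLeft (R := K) (A := H) (B := H) (S := K)).toLinearMap.lTensor H

/-- Quasitriangular Hopf algebra (Definition 2.2, (QT1)–(QT4)). -/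
structure IsQT (R : H ⊗[K] H) : Prop where
  unit : IsUnit R
  qt1 : (cm K H).rTensor H R = i13 K H R * i23 K H R
  qt2 : (cm K H).lTensor H R = j13 K H R * j12 K H R
  qt3 : ∀ h : H, (TensorProduct.comm K H H) (cm K H h) * R = R * cm K H h
  qt4l : (TensorProduct.lid K H) ((cu K H).rTensor H R) = 1
  qt4r : (TensorProduct.rid K H) ((cu K H).lTensor H R) = 1

/-- Triangular Hopf algebra: quasitriangular with `R⁻¹ = τ(R)`. -/
structure IsTriangular (R : H ⊗[K] H) extends IsQT K H R : Prop where
  tri : R * (TensorProduct.comm K H H) R = 1 ∧ (TensorProduct.comm K H H) R * R = 1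

/-- `ρˡ(m) = R² ⊗ R¹ ▷ m`. -/
def lcoactR {M : Type} [AddCommGroup M] [Module K M]
    (lact : H ⊗[K] M →ₗ[K] M) (R : H ⊗[K] H) : M →ₗ[K] H ⊗[K] M :=
  lact.lTensor H ∘ₗ (TensorProduct.assoc K H H M).toLinearMap
    ∘ₗ TensorProduct.mk K (H ⊗[K] H) M ((TensorProduct.comm K H H) R)

/-- `ρʳ(m) = m ◁ R¹ ⊗ R²`. -/
def rcoactR {M : Type} [AddCommGroup M] [Module K M]
    (ract : M ⊗[K] H →ₗ[K] M) (R : H ⊗[K] H) : M →ₗ[K] M ⊗[K] H :=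
  ract.rTensor H ∘ₗ (TensorProduct.assoc K M H H).symm.toLinearMap
    ∘ₗ (TensorProduct.mk K M (H ⊗[K] H)).flip R

/-! Coquasitriangular structures. -/

/-- The comultiplication of the tensor-product coalgebra `H ⊗ H`. -/
def cm2 : H ⊗[K] H →ₗ[K] (H ⊗[K] H) ⊗[K] (H ⊗[K] H) :=
  (tensorTensorTensorComm K H H H H).toLinearMap ∘ₗ TensorProduct.map (cm K H) (cm K H)

/-- Convolution product on linear forms on `H ⊗ H`. -/
def conv (f g : H ⊗[K] H →ₗ[K] K) : H ⊗[K] H →ₗ[K] K :=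
  LinearMap.mul' K K ∘ₗ TensorProduct.map f g ∘ₗ cm2 K H

/-- `g ⊗ h ↦ ε(g) ε(h)`, the convolution unit. -/
def epsBoth : H ⊗[K] H →ₗ[K] K :=
  LinearMap.mul' K K ∘ₗ TensorProduct.map (cu K H) (cu K H)

/-- Coquasitriangular Hopf algebra (Definition 2.3, (CQT1)–(CQT4)). -/
structure IsCQT (z : H ⊗[K] H →ₗ[K] K) : Prop where
  inv : ∃ z' : H ⊗[K] H →ₗ[K] K, conv K H z z' = epsBoth K H ∧ conv K H z' z = epsBoth K H
  cqt1 : z ∘ₗ (mu K H).lTensor H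
      = LinearMap.mul' K K ∘ₗ TensorProduct.map z z
        ∘ₗ (tensorTensorTensorComm K H H H H).toLinearMap ∘ₗ (cm K H).rTensor (H ⊗[K] H)
  cqt2 : z ∘ₗ (mu K H).rTensor H
      = LinearMap.mul' K K ∘ₗ TensorProduct.map z z
        ∘ₗ (tensorTensorTensorComm K H H H H).toLinearMap
        ∘ₗ (TensorProduct.comm K H H).toLinearMap.lTensor (H ⊗[K] H)
        ∘ₗ (cm K H).lTensor (H ⊗[K] H)
  cqt3 : (TensorProduct.lid K H).toLinearMap
        ∘ₗ TensorProduct.map z (mu K H ∘ₗ (TensorProduct.comm K H H).toLinearMap) ∘ₗ cm2 K H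
      = (TensorProduct.rid K H).toLinearMap ∘ₗ TensorProduct.map (mu K H) z ∘ₗ cm2 K H
  cqt4 : ∀ h : H, z (h ⊗ₜ 1) = cu K H h ∧ z ((1 : H) ⊗ₜ h) = cu K H h

/-- Cotriangular Hopf algebra: coquasitriangular with
`ζ(h₁,g₁) ζ(g₂,h₂) = ε(h) ε(g)`. -/
structure IsCotriangular (z : H ⊗[K] H →ₗ[K] K) extends IsCQT K H z : Prop where
  cot : conv K H z (z ∘ₗ (TensorProduct.comm K H H).toLinearMap) = epsBoth K H

/-- `h ▷ m = ζ(h, m₍₋₁₎) m₍₀₎`. -/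
def lactZ {M : Type} [AddCommGroup M] [Module K M]
    (lcoact : M →ₗ[K] H ⊗[K] M) (z : H ⊗[K] H →ₗ[K] K) : H ⊗[K] M →ₗ[K] M :=
  (TensorProduct.lid K M).toLinearMap ∘ₗ z.rTensor M
    ∘ₗ (TensorProduct.assoc K H H M).symm.toLinearMap ∘ₗ lcoact.lTensor H

/-- `m ◁ h = m₍₀₎ ζ(h, m₍₁₎)`. -/
def ractZ {M : Type} [AddCommGroup M] [Module K M]
    (rcoact : M →ₗ[K] M ⊗[K] H) (z : H ⊗[K] H →ₗ[K] K) : M ⊗[K] H →ₗ[K] M :=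
  (TensorProduct.rid K M).toLinearMap ∘ₗ z.lTensor M
    ∘ₗ (TensorProduct.comm K H H).toLinearMap.lTensor M
    ∘ₗ (TensorProduct.assoc K M H H).toLinearMap ∘ₗ rcoact.rTensor H

end YDL

/-!
On pure tensors `ψ((k ⊗ l) ⊗ (g ⊗ h)) = (k₁ g S(k₂) ⊗ h₁) ⊗ (k₃ ⊗ S(h₂) l h₃)`. If `H` is
commutative both adjoint actions are trivial, so `ψ` is the flip and `ψ² = id`.

Conversely, let `φ((a ⊗ b) ⊗ (c ⊗ d)) = ε(b) ε(c) ε(d) a`. Counitality gives `φ ∘ τ ∘ ψ = φ`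
for the flip `τ`, hence `ψ² = id` forces `φ ∘ ψ = φ ∘ τ`. On `(k ⊗ 1) ⊗ (g ⊗ 1)` this reads
`k₁ g S(k₂) = ε(k) g`, and then `g k = k₁ g S(k₂) k₃ = k g`.
-/

namespace YDL

open Coalgebra

variable {K : Type} [Field K] {H : Type} [Ring H] [HopfAlgebra K H]

lemma sum_counit_smul_left {a : H} {ι : Type*} (r : Repr K a ι) :
    ∑ i ∈ r.index, cu K H (r.right i) • r.left i = a := by
  simpa only [map_sum, TensorProduct.rid_tmul, one_smul] using
    congr(TensorProduct.rid K H $(sum_tmul_counit_eq r))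

lemma sum_counit_mul_counit {a : H} {ι : Type*} (r : Repr K a ι) :
    ∑ i ∈ r.index, cu K H (r.left i) * cu K H (r.right i) = cu K H a := by
  simpa using congr(cu K H $(sum_counit_smul r))

lemma ad_tmul {a : H} {ι : Type*} (r : Repr K a ι) (g : H) :
    ad K H (a ⊗ₜ g) = ∑ i ∈ r.index, r.left i * g * sa K H (r.right i) := by
  simp [ad, ← r.eq, sum_tmul, mul_assoc]

lemma adR_tmul (b : H) {d : H} {ι : Type*} (r : Repr K d ι) :
    adR K H (b ⊗ₜ d) = ∑ i ∈ r.index, sa K H (r.left i) * b * r.right i := by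
  simp [adR, ← r.eq, tmul_sum]

lemma counit_ad (a g : H) : cu K H (ad K H (a ⊗ₜ g)) = cu K H a * cu K H g := by
  rw [ad_tmul (ℛ K a), map_sum, ← sum_counit_mul_counit (ℛ K a), Finset.sum_mul]
  refine Finset.sum_congr rfl fun i _ => ?_
  simp only [Bialgebra.counit_mul, HopfAlgebra.counit_antipode]
  ring

lemma counit_adR (b d : H) : cu K H (adR K H (b ⊗ₜ d)) = cu K H b * cu K H d := by
  rw [adR_tmul b (ℛ K d), map_sum, ← sum_counit_mul_counit (ℛ K d), Finset.mul_sum]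
  refine Finset.sum_congr rfl fun i _ => ?_
  simp only [Bialgebra.counit_mul, HopfAlgebra.counit_antipode]
  ring

lemma ad_eq_counit_smul_of_comm (hH : ∀ x y : H, x * y = y * x) (a g : H) :
    ad K H (a ⊗ₜ g) = cu K H a • g :=
  calc ad K H (a ⊗ₜ g)
      = g * ∑ i ∈ (ℛ K a).index, (ℛ K a).left i * sa K H ((ℛ K a).right i) := by
        rw [ad_tmul (ℛ K a), Finset.mul_sum]
        exact Finset.sum_congr rfl fun i _ => by rw [hH _ g, mul_assoc]
    _ = cu K H a • g := by rw [HopfAlgebra.sum_mul_antipode_eq_smul, mul_smul_one]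

lemma adR_eq_counit_smul_of_comm (hH : ∀ x y : H, x * y = y * x) (b d : H) :
    adR K H (b ⊗ₜ d) = cu K H d • b :=
  calc adR K H (b ⊗ₜ d)
      = b * ∑ i ∈ (ℛ K d).index, sa K H ((ℛ K d).left i) * (ℛ K d).right i := by
        rw [adR_tmul b (ℛ K d), Finset.mul_sum]
        exact Finset.sum_congr rfl fun i _ => by rw [hH _ b, mul_assoc]
    _ = cu K H d • b := by rw [HopfAlgebra.sum_antipode_mul_eq_smul, mul_smul_one]

lemma sum_ad_mul (a g : H) :
    ∑ i ∈ (ℛ K a).index, ad K H ((ℛ K a).left i ⊗ₜ g) * (ℛ K a).right i = a * g := by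
  -- `T (x ⊗ y ⊗ z) = x g S(y) z`; coassociativity turns `a₁ g S(a₂) a₃` into `a₁ g ε(a₂)`.
  let T : H ⊗[K] (H ⊗[K] H) →ₗ[K] H :=
    mu K H ∘ₗ (mu K H ∘ₗ (LinearMap.mulLeft K g ∘ₗ sa K H).rTensor H).lTensor H
  have hcoassoc := congr(T $(sum_tmul_tmul_eq (ℛ K a) (fun i => ℛ K ((ℛ K a).left i))
    (fun i => ℛ K ((ℛ K a).right i))))
  simp only [T, map_sum, LinearMap.comp_apply, LinearMap.lTensor_tmul, LinearMap.rTensor_tmul,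
    LinearMap.mulLeft_apply, LinearMap.mul'_apply] at hcoassoc
  simp_rw [ad_tmul (ℛ K ((ℛ K a).left _)), Finset.sum_mul]
  simp only [mul_assoc] at hcoassoc ⊢
  rw [hcoassoc]
  simp_rw [← Finset.mul_sum, HopfAlgebra.sum_antipode_mul_eq_smul, mul_smul_one, mul_smul_comm,
    ← smul_mul_assoc, ← Finset.sum_mul, sum_counit_smul_left]

variable (K H) in
abbrev braidH4 : (H ⊗[K] H) ⊗[K] (H ⊗[K] H) →ₗ[K] (H ⊗[K] H) ⊗[K] (H ⊗[K] H) :=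
  braid K H (lcoactB K H) (ractA K H) (lactB K H) (rcoactA K H)

lemma braidH4_tmul {k h : H} {ι κ : Type*} (rk : Repr K k ι) (rh : Repr K h κ) (l g : H) :
    braidH4 K H ((k ⊗ₜ l) ⊗ₜ (g ⊗ₜ h)) = ∑ i ∈ rk.index, ∑ j ∈ rh.index,
      (ad K H (rk.left i ⊗ₜ g) ⊗ₜ rh.left j) ⊗ₜ (rk.right i ⊗ₜ adR K H (l ⊗ₜ rh.right j)) := by
  simp [braid, lcoactB, rcoactA, lactB, ractA, ← rk.eq, ← rh.eq, sum_tmul, tmul_sum]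
  exact Finset.sum_comm

lemma braidH4_eq_comm_of_comm (hH : ∀ x y : H, x * y = y * x) :
    braidH4 K H = (TensorProduct.comm K (H ⊗[K] H) (H ⊗[K] H)).toLinearMap := by
  refine TensorProduct.ext_fourfold' fun k l g h => ?_
  conv_rhs => rw [LinearEquiv.coe_coe, comm_tmul, ← sum_counit_smul (ℛ K k),
    ← sum_counit_smul_left (ℛ K h)]
  simp only [braidH4_tmul (ℛ K k) (ℛ K h), ad_eq_counit_smul_of_comm hH,
    adR_eq_counit_smul_of_comm hH, tmul_sum, sum_tmul, tmul_smul, ← smul_tmul', smul_smul,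
    mul_comm, Finset.smul_sum]

variable (K H) in
def firstFactor : (H ⊗[K] H) ⊗[K] (H ⊗[K] H) →ₗ[K] H :=
  (TensorProduct.rid K H).toLinearMap ∘ₗ
    TensorProduct.map ((TensorProduct.rid K H).toLinearMap ∘ₗ (cu K H).lTensor H) (epsBoth K H)

lemma firstFactor_tmul (a b c d : H) :
    firstFactor K H ((a ⊗ₜ b) ⊗ₜ (c ⊗ₜ d)) = (cu K H b * cu K H c * cu K H d) • a := by
  simp [firstFactor, epsBoth, smul_smul, mul_comm, mul_left_comm]

lemma firstFactor_comp_comm_comp_braidH4 :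
    firstFactor K H ∘ₗ (TensorProduct.comm K _ _).toLinearMap ∘ₗ braidH4 K H
      = firstFactor K H := by
  refine TensorProduct.ext_fourfold' fun k l g h => ?_
  conv_rhs => rw [firstFactor_tmul, ← sum_counit_smul (ℛ K k), ← sum_counit_mul_counit (ℛ K h)]
  simp only [LinearMap.comp_apply, LinearEquiv.coe_coe, braidH4_tmul (ℛ K k) (ℛ K h), map_sum,
    comm_tmul, firstFactor_tmul, counit_ad, counit_adR, Finset.mul_sum,
    Finset.smul_sum, Finset.sum_smul, smul_smul, mul_comm, mul_left_comm]

lemma firstFactor_braidH4 (k l g h : H) :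
    firstFactor K H (braidH4 K H ((k ⊗ₜ l) ⊗ₜ (g ⊗ₜ h)))
      = (cu K H l * cu K H h) • ad K H (k ⊗ₜ g) := by
  conv_rhs => rw [← sum_counit_smul_left (ℛ K k), ← sum_counit_mul_counit (ℛ K h)]
  simp only [braidH4_tmul (ℛ K k) (ℛ K h), map_sum, firstFactor_tmul, counit_adR, sum_tmul,
    ← smul_tmul', map_smul, Finset.mul_sum, Finset.smul_sum, Finset.sum_smul, smul_smul,
    mul_comm, mul_left_comm]

lemma ad_eq_counit_smul_of_braidH4_comp_self (hψ : braidH4 K H ∘ₗ braidH4 K H = LinearMap.id)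
    (k g : H) : ad K H (k ⊗ₜ g) = cu K H k • g := by
  set x : (H ⊗[K] H) ⊗[K] (H ⊗[K] H) := (k ⊗ₜ 1) ⊗ₜ (g ⊗ₜ 1)
  calc ad K H (k ⊗ₜ g)
      = firstFactor K H (braidH4 K H x) := by simp [x, firstFactor_braidH4]
    _ = firstFactor K H (TensorProduct.comm K _ _ (braidH4 K H (braidH4 K H x))) :=
        (congr($firstFactor_comp_comm_comp_braidH4 (braidH4 K H x))).symm
    _ = cu K H k • g := by
        rw [← LinearMap.comp_apply (braidH4 K H), hψ]
        simp [x, firstFactor_tmul]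

lemma mul_comm_of_ad_eq_counit_smul (had : ∀ a g : H, ad K H (a ⊗ₜ g) = cu K H a • g)
    (g k : H) : g * k = k * g :=
  calc g * k
      = g * ∑ i ∈ (ℛ K k).index, cu K H ((ℛ K k).left i) • (ℛ K k).right i := by
        rw [sum_counit_smul]
    _ = ∑ i ∈ (ℛ K k).index, ad K H ((ℛ K k).left i ⊗ₜ g) * (ℛ K k).right i := by
        simp_rw [had, Finset.mul_sum, smul_mul_assoc, mul_smul_comm]
    _ = k * g := sum_ad_mul k g

end YDL

theorem statement19_general (K : Type) [Field K] (H : Type) [Ring H] [HopfAlgebra K H] :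
    YDL.braid K H (YDL.lcoactB K H) (YDL.ractA K H) (YDL.lactB K H) (YDL.rcoactA K H)
        ∘ₗ YDL.braid K H (YDL.lcoactB K H) (YDL.ractA K H) (YDL.lactB K H) (YDL.rcoactA K H)
      = LinearMap.id
    ↔ ∀ g h : H, g * h = h * g := by
  refine ⟨fun hψ => ?_, fun hH => ?_⟩
  · exact YDL.mul_comm_of_ad_eq_counit_smul (YDL.ad_eq_counit_smul_of_braidH4_comp_self hψ)
  · change YDL.braidH4 K H ∘ₗ YDL.braidH4 K H = _
    rw [YDL.braidH4_eq_comm_of_comm hH, TensorProduct.comm_comp_comm]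

/-- the braiding `ψ_{H₄,H₄}` is a symmetry iff `H` is
commutative. -/
theorem statement19 (K : Type) [Field K] (H : Type) [Ring H] [HopfAlgebra K H]
    (hS : Function.Bijective (YDL.sa K H)) :
    YDL.braid K H (YDL.lcoactB K H) (YDL.ractA K H) (YDL.lactB K H) (YDL.rcoactA K H)
        ∘ₗ YDL.braid K H (YDL.lcoactB K H) (YDL.ractA K H) (YDL.lactB K H) (YDL.rcoactA K H)
      = LinearMap.id
    ↔ ∀ g h : H, g * h = h * g :=
  statement19_general K H
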